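/- arXiv:1602.01518 — 2 statements merged into one kernel-verified Lean document; each statement's English description precedes it below -/
import Mathlib

section
/- A pre-gap (a_α, b_α)_{α<ω₁} is a gap (no infinite c splits it) if and only if for every uncountable Γ ⊆ ω₁ there exist α < β in Γ with a_α ∩ b_β ≠ ∅. -/
noncomputable section

/-- The set of countable ordinals, i.e. ordinals below `ω₁`. -/
abbrev Omega1 : Type 1 := {o : Ordinal // o < (Cardinal.aleph 1).ord}

/-- `(a_α, b_α)_{α<ω₁}` is a pre-gap. -/
def PreGap (a b : Omega1 → Set ℕ) : Prop :=
  (∀ α, (a α).Infinite) ∧ (∀ α, (b α).Infinite) ∧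
  (∀ α, a α ∩ b α = ∅) ∧
  (∀ α β : Omega1, α < β → (a α \ a β).Finite ∧ (b α \ b β).Finite) ∧
  (∀ δ γ : Omega1, (a δ ∩ b γ).Finite)

/-- `c` splits (fills) the pre-gap: `a_α ⊆* c` and `b_α ∩ c` finite for all `α`. -/
def Splits (c : Set ℕ) (a b : Omega1 → Set ℕ) : Prop :=
  c.Infinite ∧ ∀ α, (a α \ c).Finite ∧ (b α ∩ c).Finite

/-- A gap is a pre-gap which no infinite `c` splits. -/
def IsGap (a b : Omega1 → Set ℕ) : Prop :=
  PreGap a b ∧ ¬ ∃ c : Set ℕ, Splits c a b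

/-!
If no `α < β` in an uncountable `Γ` has `a_α ∩ b_β ≠ ∅`, then `c = ⋃_{α ∈ Γ} a_α` splits the
pre-gap: an uncountable set of countable ordinals is cofinal in `ω₁`, so for each `γ` some
`δ ∈ Γ` above `γ` (and above the countably many indices needed to cover `b_γ ∩ c`) gives
`a_γ \ c ⊆ a_γ \ a_δ` and `b_γ ∩ c ⊆ b_γ \ b_δ`.

Conversely, if `c` splits it, choose `n_α` bounding the finite sets `a_α \ c` and `b_α ∩ c`.
Only countably many pairs `(n_α, a_α ∩ [0, n_α))` exist, so one of them is shared by an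
uncountable `Γ`; for `α, β ∈ Γ`, a point of `a_α ∩ b_β` below `n` would lie in `a_β ∩ b_β`, and
one above `n` would lie in `c`, hence in `b_β ∩ c`, which is bounded by `n`.
-/

theorem Ordinal.countable_Iio_of_lt_ord_aleph_one {o : Ordinal} (h : o < (Cardinal.aleph 1).ord) :
    (Set.Iio o).Countable := by
  rw [← Cardinal.le_aleph0_iff_set_countable, Cardinal.mk_Iio_ordinal, Cardinal.lift_le_aleph0,
    ← Cardinal.lt_aleph_one_iff]
  exact Cardinal.lt_ord.mp h

theorem Omega1.countable_Iic (s : Omega1) : (Set.Iic s).Countable := by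
  have : (Set.Iic s.1).Countable := by
    rw [← Set.Iio_insert]
    exact (Ordinal.countable_Iio_of_lt_ord_aleph_one s.2).insert s.1
  exact this.preimage Subtype.val_injective

instance : Uncountable Omega1 := by
  rw [← Cardinal.aleph0_lt_mk_iff]
  change _ < Cardinal.mk (Set.Iio _)
  rw [Cardinal.mk_Iio_ordinal, Cardinal.card_ord, Cardinal.aleph0_lt_lift]
  exact Cardinal.aleph0_lt_aleph_one

section Cofinal

variable {ι : Type*} [LinearOrder ι]

theorem Set.exists_mem_forall_lt_of_not_countable (hIic : ∀ s : ι, (Set.Iic s).Countable)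
    {Γ : Set ι} (hΓ : ¬Γ.Countable) {S : Set ι} (hS : S.Countable) :
    ∃ δ ∈ Γ, ∀ s ∈ S, s < δ := by
  have hcover : ¬Γ ⊆ ⋃ s ∈ S, Set.Iic s := fun h => hΓ ((hS.biUnion fun s _ => hIic s).mono h)
  obtain ⟨δ, hδΓ, hδ⟩ := Set.not_subset.mp hcover
  simp only [Set.mem_iUnion, Set.mem_Iic, not_exists, not_le] at hδ
  exact ⟨δ, hδΓ, hδ⟩

theorem finite_sdiff_biUnion (hIic : ∀ s : ι, (Set.Iic s).Countable) {a : ι → Set ℕ}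
    (hmono : ∀ α β, α < β → (a α \ a β).Finite) {Γ : Set ι} (hΓ : ¬Γ.Countable) (γ : ι) :
    (a γ \ ⋃ α ∈ Γ, a α).Finite := by
  obtain ⟨δ, hδΓ, hγδ⟩ :=
    Set.exists_mem_forall_lt_of_not_countable hIic hΓ (Set.countable_singleton γ)
  exact (hmono γ δ (hγδ γ rfl)).subset
    (Set.sdiff_subset_sdiff_right (Set.subset_biUnion_of_mem hδΓ))

theorem finite_inter_biUnion (hIic : ∀ s : ι, (Set.Iic s).Countable) {a b : ι → Set ℕ}
    (hmono : ∀ α β, α < β → (b α \ b β).Finite) {Γ : Set ι} (hΓ : ¬Γ.Countable)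
    (hdisj : ∀ α ∈ Γ, ∀ β ∈ Γ, α < β → a α ∩ b β = ∅) (γ : ι) :
    (b γ ∩ ⋃ α ∈ Γ, a α).Finite := by
  choose f hfΓ hfa using fun x : ↥(b γ ∩ ⋃ α ∈ Γ, a α) => Set.mem_iUnion₂.mp x.2.2
  obtain ⟨δ, hδΓ, hδ⟩ := Set.exists_mem_forall_lt_of_not_countable hIic hΓ
    ((Set.countable_range f).union (Set.countable_singleton γ))
  refine (hmono γ δ (hδ γ (Or.inr rfl))).subset fun x hx => ⟨hx.1, fun hxδ => ?_⟩
  have hx' : x ∈ a (f ⟨x, hx⟩) ∩ b δ := ⟨hfa ⟨x, hx⟩, hxδ⟩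
  rwa [hdisj _ (hfΓ ⟨x, hx⟩) δ hδΓ (hδ _ (Or.inl ⟨⟨x, hx⟩, rfl⟩))] at hx'

end Cofinal

theorem inter_eq_empty_of_agree_below {a a' b c : Set ℕ} {n : ℕ} (hdisj : a' ∩ b = ∅)
    (ha : ∀ x ∈ a \ c, x < n) (hb : ∀ x ∈ b ∩ c, x < n) (hagree : ∀ x < n, x ∈ a ↔ x ∈ a') :
    a ∩ b = ∅ := by
  refine Set.eq_empty_of_forall_notMem fun x ⟨hxa, hxb⟩ => ?_
  by_cases hxn : x < n
  · exact hdisj.subset ⟨(hagree x hxn).mp hxa, hxb⟩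
  · exact hxn (hb x ⟨hxb, not_not.mp fun hxc => hxn (ha x ⟨hxa, hxc⟩)⟩)

theorem exists_not_countable_forall_inter_eq_empty {ι : Type*} [Uncountable ι] {a b : ι → Set ℕ}
    {c : Set ℕ} (hdisj : ∀ α, a α ∩ b α = ∅) (ha : ∀ α, (a α \ c).Finite)
    (hb : ∀ α, (b α ∩ c).Finite) :
    ∃ Γ : Set ι, ¬Γ.Countable ∧ ∀ α ∈ Γ, ∀ β ∈ Γ, a α ∩ b β = ∅ := by
  classical
  have hbound : ∀ α, ∃ n, ∀ x ∈ (a α \ c) ∪ (b α ∩ c), x < n := fun α => by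
    obtain ⟨m, hm⟩ := ((ha α).union (hb α)).bddAbove
    exact ⟨m + 1, fun x hx => Nat.lt_succ_of_le (hm hx)⟩
  choose n hn using hbound
  let trace : ι → ℕ × Finset ℕ := fun α => (n α, (Finset.range (n α)).filter (· ∈ a α))
  obtain ⟨t, ht⟩ : ∃ t, ¬(trace ⁻¹' {t}).Countable := by
    by_contra! h
    exact not_countable (Set.Countable.of_preimage_singleton h)
  refine ⟨trace ⁻¹' {t}, ht, fun α hα β hβ => ?_⟩
  have htrace : trace α = trace β := hα.trans hβ.symm
  have hn_eq : n α = n β := congrArg Prod.fst htrace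
  refine inter_eq_empty_of_agree_below (hdisj β) (fun x hx => hn α x (Or.inl hx))
    (fun x hx => hn_eq ▸ hn β x (Or.inr hx)) fun x hx => ?_
  have hfilter := congrArg (x ∈ ·.2) htrace
  simpa [trace, hx, ← hn_eq] using hfilter

/-- A pre-gap is a gap iff every uncountable `Γ` contains `α < β` with `a_α ∩ b_β ≠ ∅`. -/
theorem stmt2 (a b : Omega1 → Set ℕ) (hpre : PreGap a b) :
    IsGap a b ↔
      ∀ Γ : Set Omega1, ¬ Γ.Countable →
        ∃ α ∈ Γ, ∃ β ∈ Γ, α < β ∧ a α ∩ b β ≠ ∅ := by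
  have ⟨hainf, _, hdisj, hmono, _⟩ := hpre
  constructor
  · rintro ⟨-, hnosplit⟩ Γ hΓ
    by_contra! hcon
    obtain ⟨α₀, hα₀, -⟩ := Set.exists_mem_forall_lt_of_not_countable Omega1.countable_Iic hΓ
      Set.countable_empty
    exact hnosplit ⟨⋃ α ∈ Γ, a α, (hainf α₀).mono (Set.subset_biUnion_of_mem hα₀), fun γ =>
      ⟨finite_sdiff_biUnion Omega1.countable_Iic (fun α β h => (hmono α β h).1) hΓ γ,
        finite_inter_biUnion Omega1.countable_Iic (fun α β h => (hmono α β h).2) hΓ hcon γ⟩⟩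
  · intro hpairs
    refine ⟨hpre, ?_⟩
    rintro ⟨c, -, hc⟩
    obtain ⟨Γ, hΓ, hempty⟩ := exists_not_countable_forall_inter_eq_empty hdisj
      (fun α => (hc α).1) (fun α => (hc α).2)
    obtain ⟨α, hα, β, hβ, -, hne⟩ := hpairs Γ hΓ
    exact hne (hempty α hα β hβ)
end
end

section
/- Let 𝐀 = (a_α)_{α<ω₁} be a family of subsets of ω such that a_β ⊄ a_α whenever α < β. Let P_𝐀 be the set of finite subsets p of 𝐀 such that no two distinct members of p are comparable under ⊆, ordered by reverse inclusion. Then for any uncountable family (p_α)_{α<ω₁} of conditions in P_𝐀 that are pairwise disjoint, all of size n, and written p_α = (x_{α,i})_{i<n} respecting the index order of 𝐀, there exist α < β with p_α ∪ p_β ∈ P_𝐀. -/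
/-!
Say that `p_ξ` lies above `p_θ` if every entry of `p_ξ` has a larger index than every entry of
`p_θ`. Only countably many conditions have an entry of index `≤ δ`, so above any countably many
conditions lies another one. If `p_ξ` lies above `p_θ`, then `a_β ⊄ a_α` for `α < β` and
disjointness show that no `x_{ξ,i}` is contained in any `x_{θ,j}`, which is witnessed by a
matrix `M i j ∈ x_{ξ,i} \ x_{θ,j}`. There are only countably many matrices, so `θ` can be taken
above some `p_η` with `M i j ∈ x_{η,i}` for every matrix `M` realized in this way by some
condition. For the matrix coming from `θ` and `ξ`, no `x_{η,i}` is contained in `x_{θ,j}`, while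
`x_{θ,j}` has the larger index, so `p_η` and `p_θ` are compatible.
-/

noncomputable section

open Set Function Cardinal

namespace Omega1

theorem countable_Iio (δ : Omega1) : (Iio δ).Countable := by
  have hδ : (Iio δ.val).Countable := by
    rw [← le_aleph0_iff_set_countable, mk_Iio_ordinal, lift_le_aleph0, ← lt_aleph_one_iff]
    exact lt_ord.mp δ.2
  exact hδ.preimage Subtype.val_injective

theorem countable_Iic_s13 (δ : Omega1) : (Iic δ).Countable := by
  rw [← Iio_insert]
  exact (countable_Iio δ).insert δ

instance : Uncountable Omega1 := by
  rw [← aleph0_lt_mk_iff]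
  have h : #Omega1 = lift.{1} (aleph 1).ord.card := mk_Iio_ordinal _
  rw [h, card_ord, ← lift_aleph0.{1, 0}, lift_lt]
  exact aleph0_lt_aleph_one

end Omega1

section

variable {ι κ α : Type*} [LinearOrder ι]

theorem exists_forall_lt_forall_lt_of_countable [Uncountable ι] [Countable κ]
    (hIic : ∀ a : ι, (Iic a).Countable) {x : ι → κ → ι} (hx : ∀ j, Injective (x · j))
    {s : Set ι} (hs : s.Countable) :
    ∃ γ, ∀ β ∈ s, β < γ ∧ ∀ i j, x β i < x γ j := by
  set bad : Set ι :=
    (⋃ β ∈ s, Iic β) ∪ ⋃ j, (x · j) ⁻¹' ⋃ β ∈ s, ⋃ i, Iic (x β i)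
  have hbad : bad.Countable :=
    (hs.biUnion fun β _ => hIic β).union <| countable_iUnion fun j =>
      (hs.biUnion fun β _ => countable_iUnion fun i => hIic (x β i)).preimage (hx j)
  obtain ⟨γ, hγ⟩ := (ne_univ_iff_exists_notMem bad).mp fun h => not_countable_univ (h ▸ hbad)
  simp only [bad, mem_union, mem_iUnion, mem_preimage, mem_Iic, not_or, not_exists,
    not_le] at hγ
  exact ⟨γ, fun β hβ => ⟨hγ.1 β hβ, fun i j => hγ.2 j β hβ i⟩⟩

theorem not_subset_of_lt {A : ι → Set α} (hA : ∀ a b, a < b → ¬ A b ⊂ A a) {u v : ι}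
    (hvu : v < u) (hne : A u ≠ A v) : ¬ A u ⊆ A v :=
  fun hsub => hA v u hvu (hsub.ssubset_of_ne hne)

theorem exists_lt_forall_not_ssubset [Uncountable ι] [Finite κ] [Countable α]
    (hIic : ∀ a : ι, (Iic a).Countable) {A : ι → Set α} (hA : ∀ a b, a < b → ¬ A b ⊂ A a)
    {x : ι → κ → ι} (hdisj : ∀ a b, a ≠ b → ∀ i j, A (x a i) ≠ A (x b j)) :
    ∃ a b, a < b ∧ ∀ i j, ¬ A (x a i) ⊂ A (x b j) ∧ ¬ A (x b j) ⊂ A (x a i) := by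
  have hx : ∀ j, Injective (x · j) := fun j a b h =>
    by_contra fun hne => hdisj a b hne j j (congrArg A h)
  let realizers (M : κ → κ → α) : Set ι := {η | ∀ i j, M i j ∈ A (x η i)}
  obtain ⟨θ, hθ⟩ := exists_forall_lt_forall_lt_of_countable hIic hx
    (countable_range fun M : {M // (realizers M).Nonempty} => M.2.some)
  obtain ⟨ξ, hξ⟩ := exists_forall_lt_forall_lt_of_countable hIic hx (countable_singleton θ)
  obtain ⟨hθξ, hξ_above⟩ := hξ θ rfl
  have hwit : ∀ i j, ∃ k, k ∈ A (x ξ i) ∧ k ∉ A (x θ j) := fun i j =>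
    not_subset.mp (not_subset_of_lt hA (hξ_above j i) (hdisj _ _ hθξ.ne' _ _))
  choose M hMξ hMθ using hwit
  have hM : (realizers M).Nonempty := ⟨ξ, hMξ⟩
  obtain ⟨hηθ, hθ_above⟩ := hθ _ ⟨⟨M, hM⟩, rfl⟩
  exact ⟨hM.some, θ, hηθ, fun i j =>
    ⟨fun h => hMθ i j (h.subset (hM.some_mem i j)), hA _ _ (hθ_above i j)⟩⟩

end

theorem stmt13_general (A : Omega1 → Set ℕ)
    (hA : ∀ α β : Omega1, α < β → ¬ A β ⊂ A α)
    (n : ℕ) (x : Omega1 → Fin n → Omega1)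
    (hdisj : ∀ α β : Omega1, α ≠ β → ∀ i j : Fin n, A (x α i) ≠ A (x β j)) :
    ∃ α β : Omega1, α < β ∧
      ∀ i j : Fin n, ¬ A (x α i) ⊂ A (x β j) ∧ ¬ A (x β j) ⊂ A (x α i) :=
  exists_lt_forall_not_ssubset Omega1.countable_Iic_s13 hA hdisj

/-- The forcing `P_𝐀` is ccc: any uncountable family of pairwise disjoint conditions of
size `n` (enumerated respecting the index order of `𝐀`) contains two compatible ones. -/
theorem stmt13 (A : Omega1 → Set ℕ)
    (hA : ∀ α β : Omega1, α < β → ¬ A β ⊂ A α)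
    (n : ℕ) (x : Omega1 → Fin n → Omega1)
    (hmono : ∀ α : Omega1, StrictMono (x α))
    (hdisj : ∀ α β : Omega1, α ≠ β → ∀ i j : Fin n, A (x α i) ≠ A (x β j))
    (hcond : ∀ α : Omega1, ∀ i j : Fin n, i ≠ j →
      ¬ A (x α i) ⊂ A (x α j) ∧ ¬ A (x α j) ⊂ A (x α i)) :
    ∃ α β : Omega1, α < β ∧
      ∀ i j : Fin n, ¬ A (x α i) ⊂ A (x β j) ∧ ¬ A (x β j) ⊂ A (x α i) :=
  stmt13_general A hA n x hdisj
end
end
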